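/- arXiv:0707.0536 — 2 statements merged into one kernel-verified Lean document; each statement's English description precedes it below -/
import Mathlib

section
/- Suppose m = m₀ identical p-values p₁ = ... = p_m with p₁ uniform on [0,1]. Then the plug-in adaptive linear step-up procedure using the modified Storey estimator G₁(p) = (1−λ)m/(Σ_h 1{p_h > λ} + 1) at level α has FDR equal to min(λ, α(1−λ)m) + (α(1−λ)m/(m+1) − λ)₊, where (x)₊ = max(x,0). -/
open MeasureTheory

/-- `sortedVal x i`: the `i`-th smallest value of `x` (`1 ≤ i ≤ m`), `sortedVal x 0 = 0`. -/
noncomputable def sortedVal {m : ℕ} (x : Fin m → ℝ) (i : ℕ) : ℝ :=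
  if i = 0 then 0
  else (Multiset.sort (Finset.univ.val.map x) (· ≤ ·)).getD (i - 1) 0

/-- `stepUpIndex Δ x = max{0 ≤ i ≤ m : p_(i) ≤ Δ(i)}`. -/
noncomputable def stepUpIndex {m : ℕ} (Δ : ℕ → ℝ) (x : Fin m → ℝ) : ℕ :=
  ((Finset.range (m + 1)).filter (fun i => sortedVal x i ≤ Δ i)).sup id

/-- The step-up procedure with threshold collection `Δ`. -/
noncomputable def stepUp {m : ℕ} (Δ : ℕ → ℝ) (x : Fin m → ℝ) : Finset (Fin m) :=
  Finset.univ.filter (fun h => x h ≤ sortedVal x (stepUpIndex Δ x))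

/-- The modified Storey estimator `G₁(p) = (1-λ) m / (Σ_h 1{p_h > λ} + 1)`. -/
noncomputable def storeyEst {m : ℕ} (lam : ℝ) (x : Fin m → ℝ) : ℝ :=
  (1 - lam) * m / ((∑ h : Fin m, if lam < x h then (1 : ℝ) else 0) + 1)

open ENNReal

lemma sortedVal_const {m : ℕ} (t : ℝ) {i : ℕ} (h1 : 1 ≤ i) (h2 : i ≤ m) :
    sortedVal (fun _ : Fin m => t) i = t := by
  have hne : i ≠ 0 := Nat.one_le_iff_ne_zero.mp h1
  rw [sortedVal, if_neg hne]
  have hmap : (Finset.univ.val.map (fun _ : Fin m => t)) = Multiset.replicate m t := by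
    simp [Multiset.map_const']
  set L := Multiset.sort (Finset.univ.val.map (fun _ : Fin m => t)) (· ≤ ·) with hL
  have hlen : L.length = m := by
    rw [hL, Multiset.length_sort, hmap, Multiset.card_replicate]
  have hmem : ∀ b ∈ L, b = t := by
    intro b hb
    have := (Multiset.mem_sort (r := (· ≤ ·))).mp hb
    rw [hmap] at this
    exact Multiset.eq_of_mem_replicate this
  have hrep : L = List.replicate m t := List.eq_replicate_iff.mpr ⟨hlen, hmem⟩
  rw [hrep]
  have : i - 1 < m := by omega
  simp [List.getD, List.getElem?_replicate, this]

lemma sortedVal_zero {m : ℕ} (x : Fin m → ℝ) : sortedVal x 0 = 0 := by simp [sortedVal]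

lemma storeyEst_const {m : ℕ} (lam t : ℝ) :
    storeyEst lam (fun _ : Fin m => t)
      = (1 - lam) * m / ((if lam < t then (m : ℝ) else 0) + 1) := by
  rw [storeyEst]
  congr 2
  simp [Finset.sum_ite_eq, mul_comm]

lemma stepUpIndex_const_pos {m : ℕ} (hm : 1 ≤ m) {α G t : ℝ}
    (h : t ≤ α * G) :
    stepUpIndex (fun i => α * i * G / m) (fun _ : Fin m => t) = m := by
  have hm' : (0:ℝ) < m := by exact_mod_cast hm
  apply le_antisymm
  · apply Finset.sup_le
    intro i hi
    simp only [Finset.mem_filter, Finset.mem_range] at hi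
    simpa using Nat.lt_succ_iff.mp hi.1
  · apply Finset.le_sup (f := id)
    simp only [Finset.mem_filter, Finset.mem_range]
    refine ⟨by omega, ?_⟩
    rw [sortedVal_const t hm le_rfl]
    calc t ≤ α * G := h
    _ = α * m * G / m := by field_simp

lemma stepUpIndex_const_neg {m : ℕ} (hm : 1 ≤ m) {α G t : ℝ}
    (hG : 0 ≤ α * G) (h : α * G < t) :
    stepUpIndex (fun i => α * i * G / m) (fun _ : Fin m => t) = 0 := by
  have hm' : (0:ℝ) < m := by exact_mod_cast hm
  apply Nat.le_zero.mp
  apply Finset.sup_le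
  intro i hi
  simp only [Finset.mem_filter, Finset.mem_range] at hi
  obtain ⟨hi1, hi2⟩ := hi
  simp only [id]
  by_contra hne
  have h1 : 1 ≤ i := by omega
  rw [sortedVal_const t h1 (by omega)] at hi2
  have : α * ↑i * G / ↑m ≤ α * G := by
    rw [div_le_iff₀ hm']
    have : (i:ℝ) ≤ m := by exact_mod_cast (by omega : i ≤ m)
    nlinarith
  linarith

lemma integrand_eq {m : ℕ} (hm : 1 ≤ m) {α lam : ℝ} (hα : 0 < α) (hlam : lam < 1) (t : ℝ) :
    ENNReal.ofReal
        ((((stepUp (fun i => α * i * storeyEst lam (fun _ : Fin m => t) / m)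
              (fun _ : Fin m => t) ∩ Finset.univ).card : ℝ))
          / ((stepUp (fun i => α * i * storeyEst lam (fun _ : Fin m => t) / m)
              (fun _ : Fin m => t)).card : ℝ)
          * (if 0 < (stepUp (fun i => α * i * storeyEst lam (fun _ : Fin m => t) / m)
              (fun _ : Fin m => t)).card then 1 else 0))
      = if t ≤ α * storeyEst lam (fun _ : Fin m => t) then 1 else 0 := by
  set G := storeyEst lam (fun _ : Fin m => t) with hGdef
  have hm' : (0:ℝ) < m := by exact_mod_cast hm
  have h1l : (0:ℝ) < 1 - lam := by linarith
  have hG : 0 < G := by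
    rw [hGdef, storeyEst_const]
    split_ifs <;> positivity
  by_cases h : t ≤ α * G
  · rw [if_pos h]
    have hidx := stepUpIndex_const_pos (α := α) (G := G) hm h
    have hset : stepUp (fun i => α * i * G / m) (fun _ : Fin m => t) = Finset.univ := by
      rw [stepUp, hidx, sortedVal_const t hm le_rfl]
      simp
    rw [hset]
    simp only [Finset.inter_self, Finset.card_univ, Fintype.card_fin]
    rw [if_pos (by omega : 0 < m)]
    rw [div_self (ne_of_gt hm'), mul_one]
    exact ENNReal.ofReal_one
  · push_neg at h
    rw [if_neg (not_le.mpr h)]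
    have hidx := stepUpIndex_const_neg (α := α) (G := G) hm (le_of_lt (by positivity)) h
    have ht : 0 < t := lt_trans (by positivity) h
    have hset : stepUp (fun i => α * i * G / m) (fun _ : Fin m => t) = ∅ := by
      rw [stepUp, hidx, sortedVal_zero]
      simp only [Finset.filter_eq_empty_iff]
      intro x _
      linarith
    rw [hset]
    simp

/-- Under maximal dependence (`m = m₀` identical uniform p-values), the plug-in
adaptive linear step-up procedure using the modified Storey estimator has FDR
`min(λ, α(1-λ)m) + (α(1-λ)m/(m+1) - λ)₊`. -/
theorem stmt10 {Ω : Type*} [MeasurableSpace Ω] (μ : Measure Ω) [IsProbabilityMeasure μ]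
    (m : ℕ) (hm : 1 ≤ m) (p₁ : Ω → ℝ) (hp₁ : Measurable p₁)
    (hunif : ∀ u ∈ Set.Icc (0 : ℝ) 1, μ {ω | p₁ ω ≤ u} = ENNReal.ofReal u)
    (α lam : ℝ) (hα : α ∈ Set.Ioo (0 : ℝ) 1) (hlam : lam ∈ Set.Ioo (0 : ℝ) 1) :
    ∫⁻ ω, ENNReal.ofReal
        ((((stepUp
              (fun i => α * i * storeyEst lam (fun _ : Fin m => p₁ ω) / m)
              (fun _ : Fin m => p₁ ω) ∩ Finset.univ).card : ℝ))
          / ((stepUp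
              (fun i => α * i * storeyEst lam (fun _ : Fin m => p₁ ω) / m)
              (fun _ : Fin m => p₁ ω)).card : ℝ)
          * (if 0 < (stepUp
              (fun i => α * i * storeyEst lam (fun _ : Fin m => p₁ ω) / m)
              (fun _ : Fin m => p₁ ω)).card then 1 else 0)) ∂μ
      = ENNReal.ofReal
          (min lam (α * (1 - lam) * m)
            + max (α * (1 - lam) * m / (m + 1) - lam) 0) := by
  
  obtain ⟨hα0, hα1⟩ := hα
  obtain ⟨hlam0, hlam1⟩ := hlam
  have hm' : (0:ℝ) < m := by exact_mod_cast hm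
  have h1l : (0:ℝ) < 1 - lam := by linarith
  set A := α * (1 - lam) * m with hA
  set B := α * (1 - lam) * m / (m + 1) with hB
  have hA0 : 0 < A := by positivity
  have hB0 : 0 < B := by positivity
  have hB1 : B < 1 := by
    rw [hB, div_lt_one (by positivity)]
    have h1 : α * (1 - lam) < 1 := by nlinarith
    nlinarith
  set c := min lam A with hc
  have hc0 : 0 < c := lt_min hlam0 hA0
  have hc1 : c ≤ lam := min_le_left _ _
  -- the key condition equivalence
  have hcond : ∀ t : ℝ, (t ≤ α * storeyEst lam (fun _ : Fin m => t)) ↔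
      (t ≤ c ∨ (lam < t ∧ t ≤ B)) := by
    intro t
    rw [storeyEst_const]
    by_cases h : lam < t
    · rw [if_pos h]
      have heq : α * ((1 - lam) * ↑m / (↑m + 1)) = B := by rw [hB]; ring
      rw [heq]
      constructor
      · intro ht; exact Or.inr ⟨h, ht⟩
      · rintro (ht | ⟨_, ht⟩)
        · linarith [le_trans ht hc1]
        · exact ht
    · rw [if_neg h]
      push_neg at h
      have heq : α * ((1 - lam) * ↑m / (0 + 1)) = A := by rw [hA]; ring
      rw [heq]
      constructor
      · intro ht; exact Or.inl (le_min h ht)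
      · rintro (ht | ⟨hlt, _⟩)
        · exact le_trans ht (min_le_right _ _)
        · linarith
  -- set S
  set S : Set Ω := p₁ ⁻¹' (Set.Iic c) ∪ p₁ ⁻¹' (Set.Ioc lam B) with hS
  have hSmeas : MeasurableSet S :=
    (hp₁ measurableSet_Iic).union (hp₁ measurableSet_Ioc)
  have hint : ∀ ω, ENNReal.ofReal
        ((((stepUp
              (fun i => α * i * storeyEst lam (fun _ : Fin m => p₁ ω) / m)
              (fun _ : Fin m => p₁ ω) ∩ Finset.univ).card : ℝ))
          / ((stepUp
              (fun i => α * i * storeyEst lam (fun _ : Fin m => p₁ ω) / m)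
              (fun _ : Fin m => p₁ ω)).card : ℝ)
          * (if 0 < (stepUp
              (fun i => α * i * storeyEst lam (fun _ : Fin m => p₁ ω) / m)
              (fun _ : Fin m => p₁ ω)).card then 1 else 0))
      = S.indicator (fun _ => (1 : ℝ≥0∞)) ω := by
    intro ω
    rw [integrand_eq hm hα0 hlam1 (p₁ ω)]
    by_cases hω : ω ∈ S
    · rw [Set.indicator_of_mem hω]
      rw [if_pos]
      rw [hcond]
      simpa [hS, Set.mem_union, Set.mem_preimage, Set.mem_Iic, Set.mem_Ioc, and_comm] using hω
    · rw [Set.indicator_of_notMem hω]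
      rw [if_neg]
      rw [hcond]
      intro hcontra
      apply hω
      simpa [hS, Set.mem_union, Set.mem_preimage, Set.mem_Iic, Set.mem_Ioc] using hcontra
  calc ∫⁻ ω, ENNReal.ofReal _ ∂μ = ∫⁻ ω, S.indicator (fun _ => (1:ℝ≥0∞)) ω ∂μ := by
        exact lintegral_congr hint
    _ = μ S := lintegral_indicator_one hSmeas
    _ = ENNReal.ofReal (min lam A + max (B - lam) 0) := by
        have hdisj : Disjoint (p₁ ⁻¹' (Set.Iic c)) (p₁ ⁻¹' (Set.Ioc lam B)) := by
          rw [Set.disjoint_left]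
          intro ω h1 h2
          simp only [Set.mem_preimage, Set.mem_Iic, Set.mem_Ioc] at h1 h2
          linarith [le_trans h1 hc1]
        rw [hS, measure_union hdisj (hp₁ measurableSet_Ioc)]
        have h1 : μ (p₁ ⁻¹' (Set.Iic c)) = ENNReal.ofReal c := by
          have := hunif c ⟨le_of_lt hc0, le_of_lt (lt_of_le_of_lt hc1 hlam1)⟩
          convert this using 2
          rfl
        have h2 : μ (p₁ ⁻¹' (Set.Ioc lam B)) = ENNReal.ofReal (max (B - lam) 0) := by
          by_cases hlB : B ≤ lam
          · have : Set.Ioc lam B = ∅ := Set.Ioc_eq_empty (not_lt.mpr hlB)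
            rw [this]
            simp [max_eq_right (by linarith : B - lam ≤ 0)]
          · push_neg at hlB
            have hsub : p₁ ⁻¹' (Set.Iic lam) ⊆ p₁ ⁻¹' (Set.Iic B) :=
              Set.preimage_mono (Set.Iic_subset_Iic.mpr (le_of_lt hlB))
            have hdiff : p₁ ⁻¹' (Set.Ioc lam B) = p₁ ⁻¹' (Set.Iic B) \ p₁ ⁻¹' (Set.Iic lam) := by
              ext ω
              simp only [Set.mem_preimage, Set.mem_Ioc, Set.mem_diff, Set.mem_Iic]
              constructor
              · rintro ⟨h1, h2⟩; exact ⟨h2, not_le.mpr h1⟩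
              · rintro ⟨h1, h2⟩; exact ⟨not_le.mp h2, h1⟩
            rw [hdiff, measure_diff hsub (hp₁ measurableSet_Iic).nullMeasurableSet
              (measure_ne_top μ _)]
            have hμB : μ (p₁ ⁻¹' (Set.Iic B)) = ENNReal.ofReal B := by
              have := hunif B ⟨le_of_lt hB0, le_of_lt hB1⟩
              convert this using 2
              rfl
            have hμlam : μ (p₁ ⁻¹' (Set.Iic lam)) = ENNReal.ofReal lam := by
              have := hunif lam ⟨le_of_lt hlam0, le_of_lt hlam1⟩
              convert this using 2
              rfl
            rw [hμB, hμlam, ← ENNReal.ofReal_sub _ (le_of_lt hlam0)]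
            rw [max_eq_left (by linarith : 0 ≤ B - lam)]
        rw [h1, h2, hc, ← ENNReal.ofReal_add (le_of_lt hc0) (le_max_right _ _)]
end

section
/- (Key lemma for adaptive FDR control under dependence.) Let R be a multiple testing procedure satisfying R ⊆ {h : p_h ≤ α·G(p)·β(|R|)/m} almost surely, where G(p) is any data-dependent positive factor and β is a shape function of the form β(r) = ∫₀^r u dν(u) for a probability measure ν on (0,∞), under unspecified dependence of the p-values (true null p-values stochastically lower bounded by uniform). Then FDR(R) ≤ α + E[ |R ∩ H₀|/|R| · 1{|R|>0} · 1{G(p) > 1/π₀} ], where π₀ = |H₀|/m > 0. -/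
open MeasureTheory

lemma tele (v : ℕ) (hv : 1 ≤ v) : ∀ m : ℕ, v ≤ m →
    (∑ r ∈ Finset.Icc v m, (1/(r:ℝ) - 1/((r:ℝ)+1))) + 1/((m:ℝ)+1) = 1/(v:ℝ) := by
  intro m
  induction m with
  | zero => intro h; omega
  | succ n ih =>
    intro hvm
    rcases Nat.lt_or_ge n v with h1 | h2
    · have hv' : v = n + 1 := by omega
      subst hv'
      simp [Finset.Icc_self]
    · rw [Finset.sum_Icc_succ_top (by omega : v ≤ n + 1)]
      have := ih h2
      push_cast
      push_cast at this
      linarith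

lemma integrableOn_id_Ioc (ν : Measure ℝ) [IsFiniteMeasure ν] (a b : ℝ) :
    IntegrableOn (fun u : ℝ => u) (Set.Ioc a b) ν := by
  have hb : IntegrableOn (fun _ : ℝ => max |a| |b|) (Set.Ioc a b) ν :=
    integrableOn_const (measure_ne_top _ _)
  refine hb.mono' (measurable_id.aestronglyMeasurable.restrict) ?_
  filter_upwards [ae_restrict_mem measurableSet_Ioc] with u hu
  rw [Real.norm_eq_abs]
  rcases hu with ⟨h1, h2⟩
  rcases abs_cases u with ⟨he, _⟩ | ⟨he, _⟩ <;> rcases abs_cases a with ⟨ha, _⟩ | ⟨ha, _⟩ <;>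
    rcases abs_cases b with ⟨hbb, _⟩ | ⟨hbb, _⟩ <;>
    simp [le_max_iff] <;> first | (left; linarith) | (right; linarith)

lemma beta_nonneg (ν : Measure ℝ) (t : ℝ) : 0 ≤ ∫ u in Set.Ioc (0:ℝ) t, u ∂ν :=
  setIntegral_nonneg measurableSet_Ioc (fun u hu => hu.1.le)

lemma beta_mono (ν : Measure ℝ) [IsFiniteMeasure ν] {t₁ t₂ : ℝ} (h : t₁ ≤ t₂) :
    ∫ u in Set.Ioc (0:ℝ) t₁, u ∂ν ≤ ∫ u in Set.Ioc (0:ℝ) t₂, u ∂ν := by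
  refine setIntegral_mono_set (integrableOn_id_Ioc ν 0 t₂) ?_ ?_
  · filter_upwards [ae_restrict_mem measurableSet_Ioc] with u hu using hu.1.le
  · exact HasSubset.Subset.eventuallyLE (Set.Ioc_subset_Ioc_right h)

lemma beta_split (ν : Measure ℝ) [IsFiniteMeasure ν] {a b : ℝ} (ha : 0 ≤ a) (h : a ≤ b) :
    ∫ u in Set.Ioc (0:ℝ) b, u ∂ν
      = (∫ u in Set.Ioc (0:ℝ) a, u ∂ν) + ∫ u in Set.Ioc a b, u ∂ν := by
  rw [← setIntegral_union ((Set.Ioc_disjoint_Ioc_of_le le_rfl)) measurableSet_Ioc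
      (integrableOn_id_Ioc ν 0 a) (integrableOn_id_Ioc ν a b),
    Set.Ioc_union_Ioc_eq_Ioc ha h]

lemma beta_piece_le (ν : Measure ℝ) [IsFiniteMeasure ν] {a b : ℝ} (h : a ≤ b) :
    ∫ u in Set.Ioc a b, u ∂ν ≤ b * (ν (Set.Ioc a b)).toReal := by
  have := setIntegral_mono_on (integrableOn_id_Ioc ν a b)
    (integrableOn_const (measure_ne_top ν _)) measurableSet_Ioc
    (fun u hu => hu.2 : ∀ u ∈ Set.Ioc a b, u ≤ b)
  rwa [setIntegral_const, smul_eq_mul, mul_comm] at this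

lemma Sbound (ν : Measure ℝ) [IsProbabilityMeasure ν] (m : ℕ) (hm : 1 ≤ m) :
    (∑ r ∈ Finset.Icc 1 m, (1/(r:ℝ) - 1/((r:ℝ)+1)) * (∫ u in Set.Ioc (0:ℝ) (r:ℝ), u ∂ν))
      + (∫ u in Set.Ioc (0:ℝ) (m:ℝ), u ∂ν) / ((m:ℝ)+1) ≤ 1 := by
  have key : ∀ m : ℕ, 1 ≤ m →
      (∑ r ∈ Finset.Icc 1 m, (1/(r:ℝ) - 1/((r:ℝ)+1)) * (∫ u in Set.Ioc (0:ℝ) (r:ℝ), u ∂ν))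
        + (∫ u in Set.Ioc (0:ℝ) (m:ℝ), u ∂ν) / ((m:ℝ)+1)
      ≤ (ν (Set.Ioc (0:ℝ) (m:ℝ))).toReal := by
    intro m hm
    induction m with
    | zero => omega
    | succ n ih =>
      rcases Nat.lt_or_ge n 1 with h1 | h2
      · have : n = 0 := by omega
        subst this
        have := beta_piece_le ν (show (0:ℝ) ≤ ((1:ℕ):ℝ) by norm_num)
        simp only [Finset.Icc_self, Finset.sum_singleton]
        push_cast at this ⊢
        linarith
      · have hle : (n:ℝ) ≤ (n:ℝ) + 1 := by linarith
        have hsplit := beta_split ν (show (0:ℝ) ≤ (n:ℝ) by positivity) hle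
        have hpiece := beta_piece_le ν hle
        have hmeas : ν (Set.Ioc (0:ℝ) ((n:ℝ)+1))
            = ν (Set.Ioc (0:ℝ) (n:ℝ)) + ν (Set.Ioc (n:ℝ) ((n:ℝ)+1)) := by
          rw [← measure_union ((Set.Ioc_disjoint_Ioc_of_le le_rfl)) measurableSet_Ioc,
            Set.Ioc_union_Ioc_eq_Ioc (by positivity) hle]
        have htr : (ν (Set.Ioc (0:ℝ) ((n:ℝ)+1))).toReal
            = (ν (Set.Ioc (0:ℝ) (n:ℝ))).toReal + (ν (Set.Ioc (n:ℝ) ((n:ℝ)+1))).toReal := by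
          rw [hmeas, ENNReal.toReal_add (measure_ne_top _ _) (measure_ne_top _ _)]
        have hIH := ih h2
        rw [Finset.sum_Icc_succ_top (by omega : 1 ≤ n + 1)]
        have hnpos : (0:ℝ) < (n:ℝ) + 1 := by positivity
        push_cast
        push_cast at hIH hsplit hpiece htr
        rw [htr]
        have hdiv : (∫ u in Set.Ioc (n:ℝ) ((n:ℝ)+1), u ∂ν) / ((n:ℝ)+1)
            ≤ (ν (Set.Ioc (n:ℝ) ((n:ℝ)+1))).toReal := by
          rw [div_le_iff₀ hnpos]
          calc _ ≤ ((n:ℝ)+1) * (ν (Set.Ioc (n:ℝ) ((n:ℝ)+1))).toReal := hpiece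
          _ = _ := by ring
        rw [hsplit]
        have e1 : (1/((n:ℝ)+1) - 1/((n:ℝ)+1+1)) * ((∫ u in Set.Ioc (0:ℝ) (n:ℝ), u ∂ν) + ∫ u in Set.Ioc (n:ℝ) ((n:ℝ)+1), u ∂ν)
            + ((∫ u in Set.Ioc (0:ℝ) (n:ℝ), u ∂ν) + ∫ u in Set.Ioc (n:ℝ) ((n:ℝ)+1), u ∂ν) / ((n:ℝ)+1+1)
            = ((∫ u in Set.Ioc (0:ℝ) (n:ℝ), u ∂ν) + ∫ u in Set.Ioc (n:ℝ) ((n:ℝ)+1), u ∂ν) / ((n:ℝ)+1) := by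
          field_simp
          ring
        have e2 : ((∫ u in Set.Ioc (0:ℝ) (n:ℝ), u ∂ν) + ∫ u in Set.Ioc (n:ℝ) ((n:ℝ)+1), u ∂ν) / ((n:ℝ)+1)
            = (∫ u in Set.Ioc (0:ℝ) (n:ℝ), u ∂ν) / ((n:ℝ)+1) + (∫ u in Set.Ioc (n:ℝ) ((n:ℝ)+1), u ∂ν) / ((n:ℝ)+1) :=
          add_div _ _ _
        linarith
  calc _ ≤ (ν (Set.Ioc (0:ℝ) (m:ℝ))).toReal := key m hm
  _ ≤ (ν Set.univ).toReal := ENNReal.toReal_mono (measure_ne_top _ _) (measure_mono (Set.subset_univ _))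
  _ = 1 := by simp

/-- Key lemma for adaptive FDR control under arbitrary dependence: if `R` is
self-consistent w.r.t. the threshold `α G(p) β(|R|)/m` with `G > 0` arbitrary
data-dependent, `β(r) = ∫₀^r u dν(u)` for a probability measure `ν` on `(0,∞)`,
and true-null p-values stochastically lower bounded by uniform, then
`FDR(R) ≤ α + E[ |R∩H₀|/|R| · 1{|R|>0} · 1{G(p) > 1/π₀} ]` where `π₀ = m₀/m > 0`. -/
theorem stmt15 {Ω : Type*} [MeasurableSpace Ω] (μ : Measure Ω) [IsProbabilityMeasure μ]
    (m : ℕ) (hm : 1 ≤ m) (p : Ω → Fin m → ℝ) (hp : Measurable p)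
    (H₀ : Finset (Fin m)) (hm₀ : 0 < H₀.card)
    (hnull : ∀ h ∈ H₀, ∀ t ∈ Set.Icc (0 : ℝ) 1,
      μ {ω | p ω h ≤ t} ≤ ENNReal.ofReal t)
    (ν : Measure ℝ) [IsProbabilityMeasure ν] (hν : ν (Set.Ioi (0 : ℝ))ᶜ = 0)
    (β : ℕ → ℝ) (hβ : ∀ r : ℕ, β r = ∫ u in Set.Ioc (0 : ℝ) (r : ℝ), u ∂ν)
    (α : ℝ) (hα : α ∈ Set.Ioo (0 : ℝ) 1)
    (G : (Fin m → ℝ) → ℝ) (hGmeas : Measurable G) (hGpos : ∀ x, 0 < G x)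
    (R : (Fin m → ℝ) → Finset (Fin m))
    (hRmeas : ∀ s : Finset (Fin m), MeasurableSet {x : Fin m → ℝ | R x = s})
    (hsc : ∀ᵐ ω ∂μ, ∀ h ∈ R (p ω),
      p ω h ≤ α * G (p ω) * β ((R (p ω)).card) / (m : ℝ)) :
    ∫⁻ ω, ENNReal.ofReal
        (((R (p ω) ∩ H₀).card : ℝ) / ((R (p ω)).card : ℝ)
          * (if 0 < (R (p ω)).card then 1 else 0)) ∂μ
      ≤ ENNReal.ofReal α
        + ∫⁻ ω, ENNReal.ofReal
            (((R (p ω) ∩ H₀).card : ℝ) / ((R (p ω)).card : ℝ)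
              * (if 0 < (R (p ω)).card then 1 else 0)
              * (if (m : ℝ) / (H₀.card : ℝ) < G (p ω) then 1 else 0)) ∂μ := by
  classical
  obtain ⟨hα0, hα1⟩ := hα
  have hm₀pos : (0:ℝ) < (H₀.card : ℝ) := by exact_mod_cast hm₀
  have hmpos : (0:ℝ) < (m:ℝ) := by exact_mod_cast hm
  set c : ℝ := α / (H₀.card : ℝ) with hcdef
  have hcpos : 0 < c := div_pos hα0 hm₀pos
  have hβnn : ∀ r : ℕ, 0 ≤ β r := fun r => (hβ r) ▸ beta_nonneg ν _
  have hβmono : ∀ ⦃r r' : ℕ⦄, r ≤ r' → β r ≤ β r' := by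
    intro r r' h
    rw [hβ r, hβ r']
    exact beta_mono ν (by exact_mod_cast h)
  set g : Fin m → Ω → ENNReal := fun h ω =>
    if p ω h ≤ c * β ((R (p ω)).card) ∧ 0 < (R (p ω)).card
    then ENNReal.ofReal (1/(((R (p ω)).card : ℝ))) else 0 with hgdef
  -- measurability of g h
  have hmeasg : ∀ h : Fin m, Measurable (g h) := by
    intro h
    have heq : g h = fun ω => ∑ s : Finset (Fin m),
        if R (p ω) = s then (if p ω h ≤ c * β s.card ∧ 0 < s.card
          then ENNReal.ofReal (1/(s.card:ℝ)) else 0) else 0 := by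
      funext ω
      rw [Finset.sum_ite_eq]
      simp [hgdef]
    rw [heq]
    apply Finset.measurable_sum
    intro s _
    have hms : MeasurableSet {ω | R (p ω) = s} := hp (hRmeas s)
    by_cases hcard : 0 < s.card
    · have : (fun ω => if R (p ω) = s then (if p ω h ≤ c * β s.card ∧ 0 < s.card
          then ENNReal.ofReal (1/(s.card:ℝ)) else 0) else 0)
          = fun ω => if R (p ω) = s then (if p ω h ≤ c * β s.card
          then ENNReal.ofReal (1/(s.card:ℝ)) else 0) else 0 := by
        funext ω; simp [hcard]
      rw [this]
      exact Measurable.ite hms (Measurable.ite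
        (measurableSet_le ((measurable_pi_apply h).comp hp) measurable_const)
        measurable_const measurable_const) measurable_const
    · simp only [hcard, and_false, if_false]
      simp only [ite_self]
      exact measurable_const
  -- pointwise a.e. bound
  have hpoint : ∀ᵐ ω ∂μ,
      ENNReal.ofReal (((R (p ω) ∩ H₀).card : ℝ) / ((R (p ω)).card : ℝ)
          * (if 0 < (R (p ω)).card then 1 else 0))
      ≤ (∑ h ∈ H₀, g h ω)
        + ENNReal.ofReal (((R (p ω) ∩ H₀).card : ℝ) / ((R (p ω)).card : ℝ)
            * (if 0 < (R (p ω)).card then 1 else 0)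
            * (if (m : ℝ) / (H₀.card : ℝ) < G (p ω) then 1 else 0)) := by
    filter_upwards [hsc] with ω hω
    by_cases hG : (m : ℝ) / (H₀.card : ℝ) < G (p ω)
    · rw [if_pos hG, mul_one]
      exact le_add_self
    · rw [if_neg hG, mul_zero, ENNReal.ofReal_zero, add_zero]
      by_cases hv : 0 < (R (p ω)).card
      · rw [if_pos hv, mul_one]
        have hGle : G (p ω) ≤ (m : ℝ) / (H₀.card : ℝ) := le_of_not_gt hG
        have hcond : ∀ h ∈ R (p ω) ∩ H₀,
            p ω h ≤ c * β ((R (p ω)).card) ∧ 0 < (R (p ω)).card := by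
          intro h hh
          refine ⟨?_, hv⟩
          have h1 := hω h (Finset.mem_of_mem_inter_left hh)
          have h2 : α * G (p ω) * β ((R (p ω)).card)
              ≤ α * ((m : ℝ) / (H₀.card : ℝ)) * β ((R (p ω)).card) :=
            mul_le_mul_of_nonneg_right
              (mul_le_mul_of_nonneg_left hGle hα0.le) (hβnn _)
          have h3 : α * ((m : ℝ) / (H₀.card : ℝ)) * β ((R (p ω)).card) / (m:ℝ)
              = c * β ((R (p ω)).card) := by
            rw [hcdef]; field_simp
          calc p ω h ≤ α * G (p ω) * β ((R (p ω)).card) / (m:ℝ) := h1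
          _ ≤ α * ((m : ℝ) / (H₀.card : ℝ)) * β ((R (p ω)).card) / (m:ℝ) := by
              apply div_le_div_of_nonneg_right h2 hmpos.le
          _ = c * β ((R (p ω)).card) := h3
        have hval : ∀ h ∈ R (p ω) ∩ H₀,
            g h ω = ENNReal.ofReal (1/(((R (p ω)).card : ℝ))) := by
          intro h hh
          simp only [hgdef]
          rw [if_pos (hcond h hh)]
        have hsum : (∑ h ∈ R (p ω) ∩ H₀, g h ω)
            = ENNReal.ofReal (((R (p ω) ∩ H₀).card : ℝ) / ((R (p ω)).card : ℝ)) := by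
          rw [Finset.sum_congr rfl hval, Finset.sum_const, nsmul_eq_mul,
            ← ENNReal.ofReal_natCast, ← ENNReal.ofReal_mul (Nat.cast_nonneg _), mul_one_div]
        rw [← hsum]
        exact Finset.sum_le_sum_of_subset (Finset.inter_subset_right)
      · rw [if_neg hv, mul_zero, ENNReal.ofReal_zero]
        exact zero_le
  -- per-hypothesis integral bound
  have hgh : ∀ h ∈ H₀, ∫⁻ ω, g h ω ∂μ ≤ ENNReal.ofReal c := by
    intro h hh
    have hbound : ∀ ω, g h ω ≤
        (∑ r ∈ Finset.Icc 1 m, ENNReal.ofReal (1/(r:ℝ) - 1/((r:ℝ)+1))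
            * Set.indicator {ω' | p ω' h ≤ c * β r} (1 : Ω → ENNReal) ω)
        + ENNReal.ofReal (1/((m:ℝ)+1))
            * Set.indicator {ω' | p ω' h ≤ c * β m} (1 : Ω → ENNReal) ω := by
      intro ω
      simp only [hgdef]
      split_ifs with hc
      · obtain ⟨hph, hv⟩ := hc
        set v := (R (p ω)).card with hvdef
        have hvm : v ≤ m := le_trans (Finset.card_le_univ _) (by simp)
        have hind : ∀ r : ℕ, v ≤ r →
            Set.indicator {ω' | p ω' h ≤ c * β r} (1 : Ω → ENNReal) ω = 1 := by
          intro r hr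
          apply Set.indicator_of_mem
          have : c * β v ≤ c * β r := mul_le_mul_of_nonneg_left (hβmono hr) hcpos.le
          exact le_trans hph this
        have tele' := tele v hv m hvm
        calc ENNReal.ofReal (1/(v:ℝ))
            = ENNReal.ofReal ((∑ r ∈ Finset.Icc v m, (1/(r:ℝ) - 1/((r:ℝ)+1))) + 1/((m:ℝ)+1)) := by
              rw [tele']
          _ = (∑ r ∈ Finset.Icc v m, ENNReal.ofReal (1/(r:ℝ) - 1/((r:ℝ)+1)))
              + ENNReal.ofReal (1/((m:ℝ)+1)) := by
              rw [ENNReal.ofReal_add ?h1 (by positivity), ENNReal.ofReal_sum_of_nonneg]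
              · intro r hr
                have hr1 : 1 ≤ r := le_trans hv (Finset.mem_Icc.mp hr).1
                have : 1/((r:ℝ)+1) ≤ 1/(r:ℝ) := by
                  apply one_div_le_one_div_of_le
                  · exact_mod_cast hr1
                  · linarith
                linarith
              case h1 =>
                apply Finset.sum_nonneg
                intro r hr
                have hr1 : 1 ≤ r := le_trans hv (Finset.mem_Icc.mp hr).1
                have : 1/((r:ℝ)+1) ≤ 1/(r:ℝ) := by
                  apply one_div_le_one_div_of_le
                  · exact_mod_cast hr1
                  · linarith
                linarith
          _ = (∑ r ∈ Finset.Icc v m, ENNReal.ofReal (1/(r:ℝ) - 1/((r:ℝ)+1))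
                * Set.indicator {ω' | p ω' h ≤ c * β r} (1 : Ω → ENNReal) ω)
              + ENNReal.ofReal (1/((m:ℝ)+1))
                * Set.indicator {ω' | p ω' h ≤ c * β m} (1 : Ω → ENNReal) ω := by
              rw [hind m hvm, mul_one]
              congr 1
              apply Finset.sum_congr rfl
              intro r hr
              rw [hind r (Finset.mem_Icc.mp hr).1, mul_one]
          _ ≤ _ := by
              apply add_le_add_left
              apply Finset.sum_le_sum_of_subset
              apply Finset.Icc_subset_Icc_left hv
      · exact zero_le
    have hmsets : ∀ r : ℕ, MeasurableSet {ω | p ω h ≤ c * β r} :=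
      fun r => measurableSet_le ((measurable_pi_apply h).comp hp) measurable_const
    have hμle : ∀ r : ℕ, μ {ω | p ω h ≤ c * β r} ≤ ENNReal.ofReal (c * β r) := by
      intro r
      by_cases h1 : c * β r ≤ 1
      · exact hnull h hh _ ⟨mul_nonneg hcpos.le (hβnn r), h1⟩
      · calc μ _ ≤ 1 := prob_le_one
        _ = ENNReal.ofReal 1 := by simp
        _ ≤ ENNReal.ofReal (c * β r) := ENNReal.ofReal_le_ofReal (le_of_not_ge h1)
    calc ∫⁻ ω, g h ω ∂μ ≤ ∫⁻ ω, ((∑ r ∈ Finset.Icc 1 m, ENNReal.ofReal (1/(r:ℝ) - 1/((r:ℝ)+1))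
            * Set.indicator {ω' | p ω' h ≤ c * β r} (1 : Ω → ENNReal) ω)
        + ENNReal.ofReal (1/((m:ℝ)+1))
            * Set.indicator {ω' | p ω' h ≤ c * β m} (1 : Ω → ENNReal) ω) ∂μ :=
          lintegral_mono hbound
    _ = (∑ r ∈ Finset.Icc 1 m, ENNReal.ofReal (1/(r:ℝ) - 1/((r:ℝ)+1))
            * μ {ω | p ω h ≤ c * β r})
        + ENNReal.ofReal (1/((m:ℝ)+1)) * μ {ω | p ω h ≤ c * β m} := by
        rw [lintegral_add_left]
        · congr 1
          · rw [lintegral_finset_sum]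
            · apply Finset.sum_congr rfl
              intro r _
              rw [lintegral_const_mul _ ((measurable_one).indicator (hmsets r)),
                lintegral_indicator_one (hmsets r)]
            · intro r _
              exact ((measurable_one).indicator (hmsets r)).const_mul _
          · rw [lintegral_const_mul _ ((measurable_one).indicator (hmsets m)),
              lintegral_indicator_one (hmsets m)]
        · apply Finset.measurable_sum
          intro r _
          exact ((measurable_one).indicator (hmsets r)).const_mul _
    _ ≤ (∑ r ∈ Finset.Icc 1 m, ENNReal.ofReal (1/(r:ℝ) - 1/((r:ℝ)+1))
            * ENNReal.ofReal (c * β r))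
        + ENNReal.ofReal (1/((m:ℝ)+1)) * ENNReal.ofReal (c * β m) := by
        apply add_le_add
        · apply Finset.sum_le_sum
          intro r _
          exact mul_le_mul_right (hμle r) _
        · exact mul_le_mul_right (hμle m) _
    _ ≤ ENNReal.ofReal c := by
        have hnn : ∀ r ∈ Finset.Icc 1 m, 0 ≤ (1/(r:ℝ) - 1/((r:ℝ)+1)) * (c * β r) := by
          intro r hr
          have hr1 : 1 ≤ r := (Finset.mem_Icc.mp hr).1
          have : 1/((r:ℝ)+1) ≤ 1/(r:ℝ) := by
            apply one_div_le_one_div_of_le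
            · exact_mod_cast hr1
            · linarith
          have h2 : (0:ℝ) ≤ c * β r := mul_nonneg hcpos.le (hβnn r)
          nlinarith
        have step1 : ∀ r ∈ Finset.Icc 1 m,
            ENNReal.ofReal (1/(r:ℝ) - 1/((r:ℝ)+1)) * ENNReal.ofReal (c * β r)
            = ENNReal.ofReal ((1/(r:ℝ) - 1/((r:ℝ)+1)) * (c * β r)) := by
          intro r hr
          have hr1 : 1 ≤ r := (Finset.mem_Icc.mp hr).1
          have : 1/((r:ℝ)+1) ≤ 1/(r:ℝ) := by
            apply one_div_le_one_div_of_le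
            · exact_mod_cast hr1
            · linarith
          rw [← ENNReal.ofReal_mul (by linarith)]
        rw [Finset.sum_congr rfl step1, ← ENNReal.ofReal_sum_of_nonneg hnn,
          ← ENNReal.ofReal_mul (by positivity), ← ENNReal.ofReal_add
            (Finset.sum_nonneg hnn) (mul_nonneg (by positivity) (mul_nonneg hcpos.le (hβnn m)))]
        apply ENNReal.ofReal_le_ofReal
        have hS := Sbound ν m hm
        simp only [← hβ] at hS
        have : (∑ r ∈ Finset.Icc 1 m, (1/(r:ℝ) - 1/((r:ℝ)+1)) * (c * β r))
            + 1/((m:ℝ)+1) * (c * β m)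
            = c * ((∑ r ∈ Finset.Icc 1 m, (1/(r:ℝ) - 1/((r:ℝ)+1)) * β r) + β m / ((m:ℝ)+1)) := by
          rw [mul_add, Finset.mul_sum]
          congr 1
          · exact Finset.sum_congr rfl (fun r _ => by ring)
          · ring
        rw [this]
        nlinarith [hcpos.le]
  -- assemble
  refine le_trans (lintegral_mono_ae hpoint) ?_
  rw [lintegral_add_left (Finset.measurable_sum _ (fun h _ => hmeasg h))]
  apply add_le_add_left
  rw [lintegral_finset_sum _ (fun h _ => hmeasg h)]
  calc (∑ h ∈ H₀, ∫⁻ ω, g h ω ∂μ) ≤ ∑ _h ∈ H₀, ENNReal.ofReal c :=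
      Finset.sum_le_sum hgh
  _ = H₀.card • ENNReal.ofReal c := Finset.sum_const _
  _ = ENNReal.ofReal α := by
      rw [nsmul_eq_mul, ← ENNReal.ofReal_natCast, ← ENNReal.ofReal_mul (Nat.cast_nonneg _)]
      congr 1
      rw [hcdef]
      field_simp
end
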